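/- arXiv:1411.3371 — 2 statements merged into one kernel-verified Lean document; each statement's English description precedes it below -/
import Mathlib

section
/- Let w : ℤ → A be a bi-infinite sequence over a finite set A, let p ≥ 1, and let I be an interval of integers containing 0 maximal with respect to the property that w(i) = w(i+p) for all i ∈ I. If I is infinite to the right (contains all nonnegative integers) and w lies in a minimal subshift, then w is periodic with period p, i.e. w(n) = w(n+p) for all n ∈ ℤ. -/
/-!
The shifts `k ↦ w (k + j)`, `j : ℕ`, lie in the compact set `X`, so they have a cluster point `y`
in `X`. Each relation `x (n + p) = x n` is closed and holds for all large enough shifts, hence `y`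
is `p`-periodic everywhere. By minimality `w` lies in the closure of the orbit of `y`, which
consists of `p`-periodic points.
-/

open Filter Function

section Shift

variable {A : Type*}

lemma shift_natCast_mem {X : Set (ℤ → A)}
    (hinv : (fun (x : ℤ → A) (k : ℤ) => x (k + 1)) '' X ⊆ X) {x : ℤ → A} (hx : x ∈ X) (j : ℕ) :
    (fun k : ℤ => x (k + j)) ∈ X := by
  induction j with
  | zero => simpa using hx
  | succ j ih =>
    convert hinv ⟨_, ih, rfl⟩ using 2 with k
    push_cast
    ring_nf

variable [TopologicalSpace A] [T2Space A]

lemma isClosed_setOf_periodic (p : ℤ) : IsClosed {x : ℤ → A | Periodic x p} := by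
  simp only [Periodic, Set.ofPred_forall]
  exact isClosed_iInter fun n => isClosed_eq (continuous_apply _) (continuous_apply _)

lemma periodic_of_mem_closure_shifts {y w : ℤ → A} {p : ℤ} (hy : Periodic y p)
    (hw : w ∈ closure {z : ℤ → A | ∃ n : ℤ, z = fun k => y (k + n)}) : Periodic w p :=
  (isClosed_setOf_periodic p).closure_subset_iff.2 (by rintro _ ⟨n, rfl⟩; exact hy.add_const n) hw

lemma exists_periodic_mem_of_forall_nonneg [CompactSpace A] {X : Set (ℤ → A)}
    (hclosed : IsClosed X) (hinv : (fun (x : ℤ → A) (k : ℤ) => x (k + 1)) '' X ⊆ X)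
    {w : ℤ → A} (hw : w ∈ X) {p : ℤ} (hper : ∀ i : ℤ, 0 ≤ i → w (i + p) = w i) :
    ∃ y ∈ X, Periodic y p := by
  obtain ⟨y, hyX, hy⟩ := hclosed.isCompact.exists_mapClusterPt (f := atTop)
    (u := fun (j : ℕ) (k : ℤ) => w (k + j))
    (tendsto_principal.2 (Eventually.of_forall (shift_natCast_mem hinv hw)))
  refine ⟨y, hyX, fun n => ?_⟩
  have hn : IsClosed {x : ℤ → A | x (n + p) = x n} :=
    isClosed_eq (continuous_apply _) (continuous_apply _)
  refine hn.mem_of_mapClusterPt hy ((eventually_ge_atTop (-n).toNat).mono fun j hj => ?_)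
  change w (n + p + j) = w (n + j)
  rw [add_right_comm]
  exact hper _ (by omega)

end Shift

theorem stmt14_general {A : Type*} [Fintype A] [TopologicalSpace A] [DiscreteTopology A]
    (X : Set (ℤ → A)) (hclosed : IsClosed X)
    (hinv : (fun (x : ℤ → A) (k : ℤ) => x (k + 1)) '' X = X)
    (hmin : ∀ x ∈ X, ∀ y ∈ X, y ∈ closure {z : ℤ → A | ∃ n : ℤ, z = fun k => x (k + n)})
    (w : ℤ → A) (hw : w ∈ X) (p : ℕ)
    (hper : ∀ i : ℤ, 0 ≤ i → w (i + p) = w i) :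
    ∀ n : ℤ, w (n + p) = w n := by
  obtain ⟨y, hyX, hy⟩ := exists_periodic_mem_of_forall_nonneg hclosed hinv.subset hw hper
  exact periodic_of_mem_closure_shifts hy (hmin y hyX w hw)

/-- If a point `w` of a minimal subshift over a finite alphabet satisfies
`w (i + p) = w i` for all `i ≥ 0` (the `p`-periodicity law holds on a right-infinite
interval containing `0`), then `w` is globally `p`-periodic: `w (n + p) = w n` for all
`n : ℤ`. -/
theorem stmt14 {A : Type*} [Fintype A] [TopologicalSpace A] [DiscreteTopology A]
    (X : Set (ℤ → A)) (hclosed : IsClosed X)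
    (hinv : (fun (x : ℤ → A) (k : ℤ) => x (k + 1)) '' X = X)
    (hmin : ∀ x ∈ X, ∀ y ∈ X, y ∈ closure {z : ℤ → A | ∃ n : ℤ, z = fun k => x (k + n)})
    (w : ℤ → A) (hw : w ∈ X) (p : ℕ) (hp : 1 ≤ p)
    (hper : ∀ i : ℤ, 0 ≤ i → w (i + p) = w i) :
    ∀ n : ℤ, w (n + p) = w n :=
  stmt14_general X hclosed hinv hmin w hw p hper
end

section
/- The Vershik (lexicographic successor) map T on the path space of a properly ordered Bratteli diagram is a homeomorphism: the map sending each non-maximal path to its lexicographic successor (and the unique maximal path to the unique minimal path) is a continuous bijection of the compact path space, with continuous inverse given by the lexicographic predecessor map. -/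
/-!
The path space is a closed subset of a product of finite discrete spaces, hence compact
Hausdorff, so it suffices that `T` be a continuous bijection.

Reversing the order on every fibre turns "`y` is the successor of `x`" into "`x` is the
successor of `y`", so injectivity is the uniqueness of successors read backwards. Every
path other than `xmin` has a predecessor: take the largest edge below its first non-minimal
edge and extend it downwards by maximal edges.

Up to any level `m` beyond the first non-maximal level `k` of `x`, the path `T x` is
determined by `x` up to level `m`; this gives continuity away from `xmax`. At `xmax`, a
nearby path `y` is maximal on a long initial segment, so `T y` is minimal there, and by
compactness and the uniqueness of `xmin` such paths are close to `xmin = T xmax`.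
-/

open Filter Topology

namespace Bratteli

variable {V E : ℕ → Type*}

abbrev Path (s : ∀ n, E n → V n) (r : ∀ n, E n → V (n + 1)) :=
  {x : ∀ n, E n // ∀ n, r n (x n) = s (n + 1) (x (n + 1))}

variable {s : ∀ n, E n → V n} {r : ∀ n, E n → V (n + 1)} {lt : ∀ n, E n → E n → Prop}

structure IsFiberOrder (r : ∀ n, E n → V (n + 1)) (lt : ∀ n, E n → E n → Prop) :
    Prop where
  cmp : ∀ n (e f : E n), r n e = r n f → e ≠ f → lt n e f ∨ lt n f e
  range : ∀ n (e f : E n), lt n e f → r n e = r n f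

theorem IsFiberOrder.flip (hlt : IsFiberOrder r lt) : IsFiberOrder r fun n e f => lt n f e :=
  ⟨fun n e f h hne => (hlt.cmp n e f h hne).symm, fun n e f h => (hlt.range n f e h).symm⟩

theorem IsFiberOrder.eq_of_not_lt_of_not_lt (hlt : IsFiberOrder r lt) {n : ℕ} {e f : E n}
    (h : r n e = r n f) (hef : ¬ lt n e f) (hfe : ¬ lt n f e) : e = f := by
  by_contra hne
  exact (hlt.cmp n e f h hne).elim hef hfe

theorem exists_mem_forall_not_lt_of_finite {α : Type*} [Finite α] {lt : α → α → Prop}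
    (hirrefl : ∀ e, ¬ lt e e) (htrans : ∀ e f g, lt e f → lt f g → lt e g)
    {S : Set α} (hS : S.Nonempty) : ∃ e ∈ S, ∀ f ∈ S, ¬ lt e f := by
  have : IsTrans α (fun a b => lt b a) := ⟨fun a b c hab hbc => htrans c b a hbc hab⟩
  have : Std.Irrefl (fun a b => lt b a) := ⟨hirrefl⟩
  exact (Finite.wellFounded_of_trans_of_irrefl _).has_min S hS

/-- `y` is the Vershik successor of `x`, and `k` is the first level at which `x` is not
maximal. -/
def IsSuccAt (lt : ∀ n, E n → E n → Prop) (x y : ∀ n, E n) (k : ℕ) : Prop :=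
  (∀ i < k, ∀ f : E i, ¬ lt i (x i) f) ∧
  (∃ f : E k, lt k (x k) f) ∧
  (∀ i < k, ∀ f : E i, ¬ lt i f (y i)) ∧
  (lt k (x k) (y k) ∧ ∀ g : E k, lt k (x k) g → ¬ lt k g (y k)) ∧
  (∀ i, k < i → y i = x i)

theorem IsSuccAt.flip {x y : ∀ n, E n} {k : ℕ} (h : IsSuccAt lt x y k) :
    IsSuccAt (fun n e f => lt n f e) y x k := by
  obtain ⟨hxmax, -, hymin, ⟨hxy, himm⟩, habove⟩ := h
  exact ⟨hymin, ⟨x k, hxy⟩, hxmax, ⟨hxy, fun g hgy hxg => himm g hxg hgy⟩,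
    fun i hi => (habove i hi).symm⟩

theorem IsSuccAt.level_eq {x x' y y' : ∀ n, E n} {k k' m : ℕ} (h : IsSuccAt lt x y k)
    (h' : IsSuccAt lt x' y' k') (hkm : k ≤ m) (hxx' : ∀ i ≤ m, x i = x' i) : k = k' := by
  obtain ⟨hxmax, ⟨f, hf⟩, -⟩ := h
  obtain ⟨hxmax', ⟨f', hf'⟩, -⟩ := h'
  rcases lt_trichotomy k k' with hk | hk | hk
  · exact absurd (hxx' k hkm ▸ hf) (hxmax' k hk f)
  · exact hk
  · exact absurd ((hxx' k' (by omega)).symm ▸ hf') (hxmax k' hk f')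

theorem Path.eq_of_eq_of_fiber {x y : Path s r} {k : ℕ} (hk : x.1 k = y.1 k)
    (hfib : ∀ i < k, r i (x.1 i) = r i (y.1 i) → x.1 i = y.1 i) :
    ∀ i ≤ k, x.1 i = y.1 i := by
  intro i hi
  induction hi using Nat.decreasingInduction with
  | self => exact hk
  | of_succ i hik ih => exact hfib i hik (by rw [x.2 i, y.2 i, ih])

theorem IsSuccAt.eqOn (hlt : IsFiberOrder r lt) {x x' : ∀ n, E n} {y y' : Path s r}
    {k k' m : ℕ} (h : IsSuccAt lt x y.1 k) (h' : IsSuccAt lt x' y'.1 k') (hkm : k ≤ m)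
    (hxx' : ∀ i ≤ m, x i = x' i) : ∀ i ≤ m, y.1 i = y'.1 i := by
  obtain rfl := h.level_eq h' hkm hxx'
  obtain ⟨-, -, hymin, ⟨hxy, himm⟩, habove⟩ := h
  obtain ⟨-, -, hymin', ⟨hxy', himm'⟩, habove'⟩ := h'
  have hxk := hxx' k hkm
  rw [hxk] at hxy himm
  have hk : y.1 k = y'.1 k := hlt.eq_of_not_lt_of_not_lt
    ((hlt.range k _ _ hxy).symm.trans (hlt.range k _ _ hxy'))
    (himm' _ hxy) (himm _ hxy')
  have hbelow := Path.eq_of_eq_of_fiber hk fun i hi hr =>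
    hlt.eq_of_not_lt_of_not_lt hr (hymin' i hi _) (hymin i hi _)
  intro i hi
  rcases le_or_gt i k with hik | hik
  · exact hbelow i hik
  · rw [habove i hik, habove' i hik, hxx' i hi]

theorem IsSuccAt.right_unique (hlt : IsFiberOrder r lt) {x : ∀ n, E n} {y y' : Path s r}
    {k k' : ℕ} (h : IsSuccAt lt x y.1 k) (h' : IsSuccAt lt x y'.1 k') : y = y' :=
  Subtype.ext <| funext fun i =>
    h.eqOn hlt h' (le_max_right i k) (fun _ _ => rfl) i (le_max_left i k)

theorem IsSuccAt.left_unique (hlt : IsFiberOrder r lt) {x x' : Path s r} {y : ∀ n, E n}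
    {k k' : ℕ} (h : IsSuccAt lt x.1 y k) (h' : IsSuccAt lt x'.1 y k') : x = x' :=
  h.flip.right_unique hlt.flip h'.flip

theorem exists_extension_maximal_below (hlt : IsFiberOrder r lt) [∀ n, Finite (E n)]
    (hr : ∀ n (v : V (n + 1)), ∃ e : E n, r n e = v)
    (hirrefl : ∀ n (e : E n), ¬ lt n e e)
    (htrans : ∀ n (e f g : E n), lt n e f → lt n f g → lt n e g)
    (z : ∀ n, E n) (k : ℕ) (e : E k) :
    ∃ p : ∀ n, E n, p k = e ∧ (∀ i < k, r i (p i) = s (i + 1) (p (i + 1))) ∧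
      (∀ i < k, ∀ f, ¬ lt i (p i) f) ∧ ∀ i, k < i → p i = z i := by
  induction k with
  | zero =>
    refine ⟨Function.update z 0 e, by simp, by simp, by simp, fun i hi => ?_⟩
    exact Function.update_of_ne hi.ne' _ _
  | succ k ih =>
    obtain ⟨f, hf, hfmax⟩ := exists_mem_forall_not_lt_of_finite (hirrefl k) (htrans k)
      (S := {g | r k g = s (k + 1) e}) (hr k _)
    obtain ⟨p, hpk, hpath, hpmax, hpz⟩ := ih f
    refine ⟨Function.update p (k + 1) e, by simp, fun i hi => ?_, fun i hi g hg => ?_,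
      fun i hi => ?_⟩
    · rw [Function.update_of_ne (by omega)]
      rcases Nat.lt_succ_iff_lt_or_eq.1 hi with hi | rfl
      · rw [Function.update_of_ne (by omega)]
        exact hpath i hi
      · rw [Function.update_self, hpk, hf]
    · rw [Function.update_of_ne (by omega)] at hg
      rcases Nat.lt_succ_iff_lt_or_eq.1 hi with hi | rfl
      · exact hpmax i hi g hg
      · rw [hpk] at hg
        exact hfmax g ((hlt.range _ f g hg).symm.trans hf) hg
    · rw [Function.update_of_ne (by omega)]
      exact hpz i (by omega)

theorem Path.exists_isSuccAt (hlt : IsFiberOrder r lt) [∀ n, Finite (E n)]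
    (hr : ∀ n (v : V (n + 1)), ∃ e : E n, r n e = v)
    (hirrefl : ∀ n (e : E n), ¬ lt n e e)
    (htrans : ∀ n (e f g : E n), lt n e f → lt n f g → lt n e g)
    (z : Path s r) {k : ℕ} (hzmin : ∀ i < k, ∀ f : E i, ¬ lt i f (z.1 i))
    (hz : ∃ f, lt k f (z.1 k)) : ∃ x : Path s r, IsSuccAt lt x.1 z.1 k := by
  obtain ⟨e, hez, hemax⟩ := exists_mem_forall_not_lt_of_finite (hirrefl k) (htrans k) hz
  obtain ⟨p, hpk, hpath, hpmax, hpz⟩ :=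
    exists_extension_maximal_below hlt hr hirrefl htrans z.1 k e
  have hp : ∀ i, r i (p i) = s (i + 1) (p (i + 1)) := by
    intro i
    rcases lt_trichotomy i k with hi | rfl | hi
    · exact hpath i hi
    · rw [hpk, hpz _ (Nat.lt_succ_self _), hlt.range _ _ _ hez, z.2]
    · rw [hpz i hi, hpz _ (by omega), z.2]
  have hpe : lt k (p k) (z.1 k) := hpk ▸ hez
  refine ⟨⟨p, hp⟩, hpmax, ⟨z.1 k, hpe⟩, hzmin, ⟨hpe, fun g hpg hgz => ?_⟩,
    fun i hi => (hpz i hi).symm⟩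
  exact hemax g hgz (hpk ▸ hpg)

theorem injective_of_isSuccAt (hlt : IsFiberOrder r lt) {xmin xmax : Path s r}
    (hminp : ∀ n (f : E n), ¬ lt n f (xmin.1 n)) {T : Path s r → Path s r}
    (hTmax : T xmax = xmin) (hT : ∀ x, x ≠ xmax → ∃ k, IsSuccAt lt x.1 (T x).1 k) :
    Function.Injective T := by
  have hT_ne_min : ∀ x, x ≠ xmax → T x ≠ xmin := fun x hx hTx => by
    obtain ⟨k, -, -, -, ⟨hxT, -⟩, -⟩ := hT x hx
    exact hminp k _ (hTx ▸ hxT)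
  intro a b hab
  by_cases ha : a = xmax <;> by_cases hb : b = xmax
  · rw [ha, hb]
  · exact absurd (hab ▸ ha ▸ hTmax) (hT_ne_min b hb)
  · exact absurd (hab ▸ hb ▸ hTmax) (hT_ne_min a ha)
  · obtain ⟨k, hk⟩ := hT a ha
    obtain ⟨k', hk'⟩ := hT b hb
    exact hk.left_unique hlt (hab ▸ hk')

theorem surjective_of_isSuccAt (hlt : IsFiberOrder r lt) [∀ n, Finite (E n)]
    (hr : ∀ n (v : V (n + 1)), ∃ e : E n, r n e = v)
    (hirrefl : ∀ n (e : E n), ¬ lt n e e)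
    (htrans : ∀ n (e f g : E n), lt n e f → lt n f g → lt n e g) {xmin xmax : Path s r}
    (hminuniq : ∀ y : Path s r, (∀ n (f : E n), ¬ lt n f (y.1 n)) → y = xmin)
    (hmaxp : ∀ n (f : E n), ¬ lt n (xmax.1 n) f) {T : Path s r → Path s r}
    (hTmax : T xmax = xmin) (hT : ∀ x, x ≠ xmax → ∃ k, IsSuccAt lt x.1 (T x).1 k) :
    Function.Surjective T := by
  classical
  intro z
  by_cases hz : z = xmin
  · exact ⟨xmax, hz ▸ hTmax⟩
  have hex : ∃ k, ∃ f, lt k f (z.1 k) := by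
    by_contra! h
    exact hz (hminuniq z h)
  obtain ⟨x, hx⟩ := z.exists_isSuccAt hlt hr hirrefl htrans
    (fun i hi f hf => Nat.find_min hex hi ⟨f, hf⟩) (Nat.find_spec hex)
  have hxmax : x ≠ xmax := by
    rintro rfl
    obtain ⟨f, hf⟩ := hx.2.1
    exact hmaxp _ f hf
  obtain ⟨k, hk⟩ := hT x hxmax
  exact ⟨x, hk.right_unique hlt hx⟩

section Topology

variable [∀ n, TopologicalSpace (E n)] [∀ n, DiscreteTopology (E n)]

theorem Path.isClopen_setOf_apply_mem (n : ℕ) (S : Set (E n)) :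
    IsClopen {y : Path s r | y.1 n ∈ S} :=
  (isClopen_discrete S).preimage ((continuous_apply n).comp continuous_subtype_val)

theorem Path.eventually_forall_le_eq (x : Path s r) (m : ℕ) :
    ∀ᶠ y in 𝓝 x, ∀ i ≤ m, y.1 i = x.1 i :=
  (eventually_all_finite (Set.finite_Iic m)).2 fun i _ =>
    (Path.isClopen_setOf_apply_mem i {x.1 i}).isOpen.mem_nhds rfl

instance [∀ n, Finite (E n)] : CompactSpace (Path s r) := by
  refine isCompact_iff_compactSpace.1 (IsClosed.isCompact
    (s := {x : ∀ n, E n | ∀ n, r n (x n) = s (n + 1) (x (n + 1))}) ?_)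
  simp only [Set.ofPred_forall]
  exact isClosed_iInter fun n =>
    (isClosed_discrete {q : E n × E (n + 1) | r n q.1 = s (n + 1) q.2}).preimage
      ((continuous_apply n).prodMk (continuous_apply (n + 1)))

theorem Path.exists_forall_min_le_mem [CompactSpace (Path s r)] {xmin : Path s r}
    (hminuniq : ∀ y : Path s r, (∀ n (f : E n), ¬ lt n f (y.1 n)) → y = xmin)
    {U : Set (Path s r)} (hU : U ∈ 𝓝 xmin) :
    ∃ m, ∀ y : Path s r, (∀ i ≤ m, ∀ f : E i, ¬ lt i f (y.1 i)) → y ∈ U := by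
  set K : ℕ → Set (Path s r) := fun m => {y | ∀ i ≤ m, ∀ f : E i, ¬ lt i f (y.1 i)}
  have hK : Antitone K := fun m m' hmm' y hy i hi => hy i (hi.trans hmm')
  have hKc : ∀ m, IsClosed (K m) := fun m => by
    have : K m = ⋂ i ∈ Set.Iic m, {y : Path s r | y.1 i ∈ {e | ∀ f, ¬ lt i f e}} := by
      ext; simp [K]
    exact this ▸ isClosed_biInter fun i _ => (Path.isClopen_setOf_apply_mem i _).isClosed
  obtain ⟨m, hm⟩ := exists_subset_nhds_of_isCompact' hK.directed_ge
    (fun m => (hKc m).isCompact) hKc fun y hy => by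
      rw [hminuniq y fun n => Set.mem_iInter.1 hy n n le_rfl]
      exact hU
  exact ⟨m, hm⟩

theorem continuous_of_isSuccAt [CompactSpace (Path s r)] (hlt : IsFiberOrder r lt)
    {xmin xmax : Path s r}
    (hminuniq : ∀ y : Path s r, (∀ n (f : E n), ¬ lt n f (y.1 n)) → y = xmin)
    (hmaxp : ∀ n (f : E n), ¬ lt n (xmax.1 n) f) {T : Path s r → Path s r}
    (hTmax : T xmax = xmin) (hT : ∀ x, x ≠ xmax → ∃ k, IsSuccAt lt x.1 (T x).1 k) :
    Continuous T := by
  refine continuous_induced_rng.2 <| continuous_pi fun n =>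
    continuous_iff_continuousAt.2 fun x => ?_
  rw [ContinuousAt, nhds_discrete (E n), tendsto_pure]
  by_cases hx : x = xmax
  · rw [hx]
    obtain ⟨m, hm⟩ := Path.exists_forall_min_le_mem hminuniq
      ((Path.isClopen_setOf_apply_mem n {xmin.1 n}).isOpen.mem_nhds rfl)
    filter_upwards [Path.eventually_forall_le_eq xmax m] with y hy
    by_cases hy' : y = xmax
    · rw [hy']
    obtain ⟨k, hk⟩ := hT y hy'
    have hmk : m < k := by
      by_contra! hkm
      obtain ⟨f, hf⟩ := hk.2.1
      exact hmaxp k f (hy k hkm ▸ hf)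
    exact (hm (T y) fun i hi => hk.2.2.1 i (by omega)).trans (congrArg (·.1 n) hTmax.symm)
  · obtain ⟨k, hk⟩ := hT x hx
    filter_upwards [Path.eventually_forall_le_eq x (max k n)] with y hy
    have hy' : y ≠ xmax := by
      rintro rfl
      obtain ⟨f, hf⟩ := hk.2.1
      exact hmaxp k f ((hy k (le_max_left k n)).symm ▸ hf)
    obtain ⟨k', hk'⟩ := hT y hy'
    exact (hk.eqOn hlt hk' (le_max_left k n) (fun i hi => (hy i hi).symm) n
      (le_max_right k n)).symm

end Topology

end Bratteli

open Bratteli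

theorem stmt19_general {V : ℕ → Type*} {E : ℕ → Type*}
    [∀ n, Fintype (E n)]
    [∀ n, TopologicalSpace (E n)] [∀ n, DiscreteTopology (E n)]
    (s : ∀ n, E n → V n) (r : ∀ n, E n → V (n + 1))
    (hr : ∀ n (v : V (n + 1)), ∃ e : E n, r n e = v)
    (lt : ∀ n, E n → E n → Prop)
    (hcmp : ∀ n (e f : E n), r n e = r n f → e ≠ f → lt n e f ∨ lt n f e)
    (hrange : ∀ n (e f : E n), lt n e f → r n e = r n f)
    (hasymm : ∀ n (e f : E n), lt n e f → ¬ lt n f e)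
    (htrans : ∀ n (e f g : E n), lt n e f → lt n f g → lt n e g)
    (xmin xmax : {x : ∀ n, E n // ∀ n, r n (x n) = s (n + 1) (x (n + 1))})
    (hminp : ∀ n (f : E n), ¬ lt n f (xmin.1 n))
    (hminuniq : ∀ y : {x : ∀ n, E n // ∀ n, r n (x n) = s (n + 1) (x (n + 1))},
      (∀ n (f : E n), ¬ lt n f (y.1 n)) → y = xmin)
    (hmaxp : ∀ n (f : E n), ¬ lt n (xmax.1 n) f)
    (T : {x : ∀ n, E n // ∀ n, r n (x n) = s (n + 1) (x (n + 1))} →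
         {x : ∀ n, E n // ∀ n, r n (x n) = s (n + 1) (x (n + 1))})
    (hTmax : T xmax = xmin)
    (hTsucc : ∀ x, x ≠ xmax → ∃ k : ℕ,
      (∀ i < k, ∀ f : E i, ¬ lt i (x.1 i) f) ∧
      (∃ f : E k, lt k (x.1 k) f) ∧
      (∀ i < k, ∀ f : E i, ¬ lt i f ((T x).1 i)) ∧
      (lt k (x.1 k) ((T x).1 k) ∧
        ∀ g : E k, lt k (x.1 k) g → ¬ lt k g ((T x).1 k)) ∧
      (∀ i, k < i → (T x).1 i = x.1 i)) :
    IsHomeomorph T := by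
  have hlt : IsFiberOrder r lt := ⟨hcmp, hrange⟩
  have hirrefl : ∀ n (e : E n), ¬ lt n e e := fun n e h => hasymm n e e h h
  have hT : ∀ x, x ≠ xmax → ∃ k, IsSuccAt lt x.1 (T x).1 k := hTsucc
  rw [isHomeomorph_iff_continuous_bijective]
  exact ⟨continuous_of_isSuccAt hlt hminuniq hmaxp hTmax hT,
    injective_of_isSuccAt hlt hminp hTmax hT,
    surjective_of_isSuccAt hlt hr hirrefl htrans hminuniq hmaxp hTmax hT⟩

/-- The Vershik (lexicographic successor) map on the path space of a properly ordered
Bratteli diagram is a homeomorphism.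

Setup: `E n` is the (finite, nonempty, discrete) set of edges between levels `n` and
`n + 1`, with source `s`, range `r`, and a strict order `lt` which is a linear order on
each range-fiber (edges are comparable iff they have the same range).  The path space is
`{x : ∀ n, E n // ∀ n, r n (x n) = s (n + 1) (x (n + 1))}` with the product topology.
`xmin` (resp. `xmax`) is the unique infinite path all of whose edges are minimal
(resp. maximal) in their fibers.  `T` sends `xmax` to `xmin`, and any other path `x` —
with `k` the first level where `x` is non-maximal — to the path agreeing with `x` above
level `k`, whose edge at level `k` is the successor of `x`'s, and which is minimal below
level `k`.  Then `T` is a homeomorphism (its inverse is the lexicographic predecessor). -/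
theorem stmt19 {V : ℕ → Type*} {E : ℕ → Type*}
    [∀ n, Fintype (E n)] [∀ n, Nonempty (E n)]
    [∀ n, TopologicalSpace (E n)] [∀ n, DiscreteTopology (E n)]
    (s : ∀ n, E n → V n) (r : ∀ n, E n → V (n + 1))
    (hs : ∀ n (v : V n), ∃ e : E n, s n e = v)
    (hr : ∀ n (v : V (n + 1)), ∃ e : E n, r n e = v)
    (lt : ∀ n, E n → E n → Prop)
    (hcmp : ∀ n (e f : E n), r n e = r n f → e ≠ f → lt n e f ∨ lt n f e)
    (hrange : ∀ n (e f : E n), lt n e f → r n e = r n f)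
    (hasymm : ∀ n (e f : E n), lt n e f → ¬ lt n f e)
    (htrans : ∀ n (e f g : E n), lt n e f → lt n f g → lt n e g)
    (xmin xmax : {x : ∀ n, E n // ∀ n, r n (x n) = s (n + 1) (x (n + 1))})
    (hminp : ∀ n (f : E n), ¬ lt n f (xmin.1 n))
    (hminuniq : ∀ y : {x : ∀ n, E n // ∀ n, r n (x n) = s (n + 1) (x (n + 1))},
      (∀ n (f : E n), ¬ lt n f (y.1 n)) → y = xmin)
    (hmaxp : ∀ n (f : E n), ¬ lt n (xmax.1 n) f)
    (hmaxuniq : ∀ y : {x : ∀ n, E n // ∀ n, r n (x n) = s (n + 1) (x (n + 1))},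
      (∀ n (f : E n), ¬ lt n (y.1 n) f) → y = xmax)
    (T : {x : ∀ n, E n // ∀ n, r n (x n) = s (n + 1) (x (n + 1))} →
         {x : ∀ n, E n // ∀ n, r n (x n) = s (n + 1) (x (n + 1))})
    (hTmax : T xmax = xmin)
    (hTsucc : ∀ x, x ≠ xmax → ∃ k : ℕ,
      (∀ i < k, ∀ f : E i, ¬ lt i (x.1 i) f) ∧
      (∃ f : E k, lt k (x.1 k) f) ∧
      (∀ i < k, ∀ f : E i, ¬ lt i f ((T x).1 i)) ∧
      (lt k (x.1 k) ((T x).1 k) ∧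
        ∀ g : E k, lt k (x.1 k) g → ¬ lt k g ((T x).1 k)) ∧
      (∀ i, k < i → (T x).1 i = x.1 i)) :
    IsHomeomorph T :=
  stmt19_general s r hr lt hcmp hrange hasymm htrans xmin xmax hminp hminuniq hmaxp T hTmax hTsucc
end
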